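/- Let c be a far-polar mapping of the cycle C_{4k} to O_r. Then the number of green edges of C_{4k} in the directed extension c^D (edges whose clockwise arc crosses a fixed generic interval I) has the same parity as the winding number of the shortest-arc extension c^{sh} restricted to the even-indexed component C_{4k}^{#2e} of the exact square. -/
import Mathlib


open scoped Classical

/-- The representative in `[0, r)` of a point of the circle `O_r` (of circumference `r`),
i.e. the clockwise arc length from the base point `0`. -/
noncomputable def dlift (r : ℝ) (hr : 0 < r) (x : AddCircle r) : ℝ :=
  haveI : Fact (0 < r) := ⟨hr⟩
  ((AddCircle.equivIco r 0 x : Set.Ico (0 : ℝ) (0 + r)) : ℝ)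

/-- The representative in `(-r/2, r/2]` of a point of the circle `O_r`: the signed length of
the shortest arc from the base point (positive = clockwise). -/
noncomputable def slift (r : ℝ) (hr : 0 < r) (x : AddCircle r) : ℝ :=
  haveI : Fact (0 < r) := ⟨hr⟩
  ((AddCircle.equivIoc r (-(r / 2)) x : Set.Ioc (-(r / 2)) (-(r / 2) + r)) : ℝ)

/-- A mapping `c` of the vertices of the cycle `C_n` to the circle `O_r` is far-polar if for
each `i` the points `c (i-1)` and `c (i+1)` partition `O_r` into two arcs of unequal lengths
and `c i` lies strictly inside the larger arc.  Here `dlift r hr (c (i+1) - c (i-1))` is the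
length of the clockwise arc from `c (i-1)` to `c (i+1)`. -/
def FarPolarCycle (n : ℕ) (r : ℝ) (hr : 0 < r) (c : ZMod n → AddCircle r) : Prop :=
  ∀ i : ZMod n,
    dlift r hr (c (i + 1) - c (i - 1)) ≠ r / 2 ∧
    (if r / 2 < dlift r hr (c (i + 1) - c (i - 1)) then
      0 < dlift r hr (c i - c (i - 1)) ∧
        dlift r hr (c i - c (i - 1)) < dlift r hr (c (i + 1) - c (i - 1))
    else
      dlift r hr (c (i + 1) - c (i - 1)) < dlift r hr (c i - c (i - 1)))

/-- The clockwise (directed) arc from `x` to `y` on `O_r` — the image of the directed edge `xy`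
under the directed extension `c^D` — contains the point `t` (standing for a generic small
interval `I`) in its interior.  Such an edge is called *green*; otherwise it is *orange*. -/
def CrossD (r : ℝ) (hr : 0 < r) (x y t : AddCircle r) : Prop :=
  0 < dlift r hr (t - x) ∧ dlift r hr (t - x) < dlift r hr (y - x)

section Helpers

variable {r : ℝ} (hr : 0 < r)

lemma dlift_coe (b : ℝ) : dlift r hr (b : AddCircle r) = toIcoMod hr 0 b := by
  simp [dlift, AddCircle.equivIco, QuotientAddGroup.equivIcoMod_coe]

lemma slift_coe (b : ℝ) : slift r hr (b : AddCircle r) = toIocMod hr (-(r/2)) b := by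
  simp [slift, AddCircle.equivIoc, QuotientAddGroup.equivIocMod_coe]

lemma coe_dlift (x : AddCircle r) : ((dlift r hr x : ℝ) : AddCircle r) = x := by
  induction x using QuotientAddGroup.induction_on with
  | H b =>
    rw [dlift_coe, QuotientAddGroup.eq_iff_sub_mem, toIcoMod_sub_self]
    exact AddSubgroup.zsmul_mem_zmultiples r _

lemma dlift_nonneg (x : AddCircle r) : 0 ≤ dlift r hr x := by
  induction x using QuotientAddGroup.induction_on with
  | H b => rw [dlift_coe]; simpa using (toIcoMod_mem_Ico hr 0 b).1

lemma dlift_lt (x : AddCircle r) : dlift r hr x < r := by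
  induction x using QuotientAddGroup.induction_on with
  | H b => rw [dlift_coe]; simpa using (toIcoMod_mem_Ico hr 0 b).2

lemma dlift_eq {x : AddCircle r} {y : ℝ} (h0 : 0 ≤ y) (h1 : y < r)
    (hxy : (y : AddCircle r) = x) : dlift r hr x = y := by
  subst hxy
  rw [dlift_coe, toIcoMod_eq_self]
  exact ⟨h0, by simpa using h1⟩

lemma slift_eq {x : AddCircle r} {y : ℝ} (h0 : -(r/2) < y) (h1 : y ≤ r/2)
    (hxy : (y : AddCircle r) = x) : slift r hr x = y := by
  subst hxy
  rw [slift_coe, toIocMod_eq_self]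
  exact ⟨h0, by linarith⟩

lemma dlift_zero : dlift r hr (0 : AddCircle r) = 0 :=
  dlift_eq hr le_rfl hr (by norm_num)

lemma dlift_eq_zero_iff {x : AddCircle r} : dlift r hr x = 0 ↔ x = 0 := by
  constructor
  · intro h
    have := coe_dlift hr x
    rw [h] at this
    simpa using this.symm
  · rintro rfl; exact dlift_zero hr

lemma dlift_pos {x : AddCircle r} (hx : x ≠ 0) : 0 < dlift r hr x :=
  lt_of_le_of_ne (dlift_nonneg hr x) (fun h => hx ((dlift_eq_zero_iff hr).1 h.symm))

lemma coe_r (hr : 0 < r) : ((r : ℝ) : AddCircle r) = 0 := by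
  rw [QuotientAddGroup.eq_zero_iff]
  exact AddSubgroup.mem_zmultiples r

lemma dlift_neg {x : AddCircle r} (hx : x ≠ 0) : dlift r hr (-x) = r - dlift r hr x := by
  apply dlift_eq hr
  · have := dlift_lt hr x; linarith
  · have := dlift_pos hr hx; linarith
  · rw [QuotientAddGroup.mk_sub, coe_r hr, coe_dlift hr]
    abel

/-- Addition formula for `dlift`. -/
lemma dlift_add (x y : AddCircle r) :
    dlift r hr (x + y) =
      dlift r hr x + dlift r hr y - (if r ≤ dlift r hr x + dlift r hr y then r else 0) := by
  by_cases h : r ≤ dlift r hr x + dlift r hr y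
  · rw [if_pos h]
    apply dlift_eq hr (by linarith)
    · have := dlift_lt hr x; have := dlift_lt hr y; linarith
    · rw [QuotientAddGroup.mk_sub, QuotientAddGroup.mk_add, coe_r hr,
        coe_dlift hr, coe_dlift hr]
      abel
  · rw [if_neg h, sub_zero]
    apply dlift_eq hr
    · have := dlift_nonneg hr x; have := dlift_nonneg hr y; linarith
    · push_neg at h; linarith
    · rw [QuotientAddGroup.mk_add, coe_dlift hr, coe_dlift hr]

lemma crossD_iff {x y t : AddCircle r} (hx : t ≠ x) (hy : t ≠ y) :
    CrossD r hr x y t ↔ r ≤ dlift r hr (x - t) + dlift r hr (y - x) := by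
  have hx0 : x - t ≠ 0 := fun h => hx (by rwa [sub_eq_zero, eq_comm] at h)
  have htx : dlift r hr (t - x) = r - dlift r hr (x - t) := by
    rw [← dlift_neg hr hx0, neg_sub]
  have hne : dlift r hr (x - t) + dlift r hr (y - x) ≠ r := by
    intro h
    apply hy
    have h1 : ((dlift r hr (y - x) : ℝ) : AddCircle r) = y - x := coe_dlift hr _
    have h2 : dlift r hr (y - x) = r - dlift r hr (x - t) := by linarith
    rw [h2, QuotientAddGroup.mk_sub, coe_r hr, coe_dlift hr] at h1
    have h3 : t - x = y - x := by rw [← h1]; abel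
    have := sub_left_inj.mp h3
    exact this
  constructor
  · rintro ⟨-, h2⟩
    rw [htx] at h2
    linarith
  · intro h
    have hlt : r < dlift r hr (x - t) + dlift r hr (y - x) := lt_of_le_of_ne h (Ne.symm hne)
    constructor <;> rw [htx]
    · have := dlift_lt hr (x - t); linarith
    · linarith

/-- The per-edge step relation. -/
lemma edge_step {x y t : AddCircle r} (hx : t ≠ x) (hy : t ≠ y) :
    dlift r hr (y - x) =
      dlift r hr (y - t) - dlift r hr (x - t) +
        (if CrossD r hr x y t then r else 0) := by
  have key := dlift_add hr (x - t) (y - x)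
  rw [show (x - t) + (y - x) = y - t from by abel] at key
  simp only [crossD_iff hr hx hy]
  rw [key]
  ring

/-- The far-polar pair relation: the two directed edge arcs of a pair sum to the
shortest arc plus a full turn. -/
lemma pair_step {a b c2 : AddCircle r}
    (hne : dlift r hr (c2 - a) ≠ r / 2)
    (hfp : if r / 2 < dlift r hr (c2 - a) then
        0 < dlift r hr (b - a) ∧ dlift r hr (b - a) < dlift r hr (c2 - a)
      else dlift r hr (c2 - a) < dlift r hr (b - a)) :
    dlift r hr (b - a) + dlift r hr (c2 - b) = slift r hr (c2 - a) + r := by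
  have hDlt := dlift_lt hr (c2 - a)
  have hD0 := dlift_nonneg hr (c2 - a)
  have hd1lt := dlift_lt hr (b - a)
  have hd10 := dlift_nonneg hr (b - a)
  by_cases h : r / 2 < dlift r hr (c2 - a)
  · rw [if_pos h] at hfp
    obtain ⟨h1, h2⟩ := hfp
    have hcb : dlift r hr (c2 - b) = dlift r hr (c2 - a) - dlift r hr (b - a) := by
      apply dlift_eq hr (by linarith) (by linarith)
      rw [QuotientAddGroup.mk_sub, coe_dlift hr, coe_dlift hr]
      abel
    have hs : slift r hr (c2 - a) = dlift r hr (c2 - a) - r := by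
      apply slift_eq hr (by linarith) (by linarith)
      rw [QuotientAddGroup.mk_sub, coe_r hr, coe_dlift hr]
      abel
    rw [hcb, hs]; ring
  · rw [if_neg h] at hfp
    push_neg at h
    have hDlt2 : dlift r hr (c2 - a) < r / 2 := lt_of_le_of_ne h hne
    have hcb : dlift r hr (c2 - b) = dlift r hr (c2 - a) - dlift r hr (b - a) + r := by
      apply dlift_eq hr (by linarith) (by linarith)
      rw [QuotientAddGroup.mk_add, QuotientAddGroup.mk_sub, coe_r hr,
        coe_dlift hr, coe_dlift hr]
      abel
    have hs : slift r hr (c2 - a) = dlift r hr (c2 - a) :=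
      slift_eq hr (by linarith) (by linarith) (coe_dlift hr _)
    rw [hcb, hs]; ring

lemma sum_zmod_eq_sum_range {n : ℕ} [NeZero n] (f : ZMod n → ℝ) :
    ∑ i : ZMod n, f i = ∑ m ∈ Finset.range n, f (m : ZMod n) := by
  refine Finset.sum_nbij' (i := fun i : ZMod n => i.val) (j := fun m : ℕ => (m : ZMod n))
    ?_ ?_ ?_ ?_ ?_
  · intro i _; exact Finset.mem_range.2 (ZMod.val_lt i)
  · intro m _; exact Finset.mem_univ _
  · intro i _; exact ZMod.natCast_rightInverse i
  · intro m hm; exact ZMod.val_cast_of_lt (Finset.mem_range.1 hm)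
  · intro i _; rw [ZMod.natCast_rightInverse i]

lemma sum_range_two_mul (f : ℕ → ℝ) (m : ℕ) :
    ∑ j ∈ Finset.range (2 * m), f j = ∑ j ∈ Finset.range m, (f (2 * j) + f (2 * j + 1)) := by
  induction m with
  | zero => simp
  | succ m ih =>
    rw [Finset.sum_range_succ, ← ih, show 2 * (m + 1) = (2 * m + 1) + 1 by ring,
      Finset.sum_range_succ, Finset.sum_range_succ]
    ring

lemma sum_shift {n : ℕ} [NeZero n] (e : ZMod n → ℝ) :
    ∑ i : ZMod n, e (i + 1) = ∑ i : ZMod n, e i :=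
  Fintype.sum_equiv (Equiv.addRight 1) _ _ (fun _ => rfl)

end Helpers

/-- Let `c` be a far-polar mapping of the cycle `C_{4k}` to `O_r` and let `t` be a point of
`O_r` (a generic interval) avoiding all vertex images.  Then the number of green edges of
`C_{4k}` in the directed extension `c^D` (edges whose clockwise arc crosses over `t`) has the
same parity as the winding number of the shortest-arc extension `c^{sh}` restricted to the
even-indexed component `C_{4k}^{#2e}` of the exact square, i.e. the integer `z` with
`∑ slift = z * r` along the even cycle `c 0, c 2, c 4, …`. -/
theorem greenCount_windingParity (k : ℕ) (hk : 1 ≤ k) (r : ℝ) (hr : 0 < r)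
    (c : ZMod (4 * k) → AddCircle r) (hc : FarPolarCycle (4 * k) r hr c)
    (t : AddCircle r) (ht : ∀ i : ZMod (4 * k), t ≠ c i) :
    ∃ z : ℤ,
      (∑ j ∈ Finset.range (2 * k),
          slift r hr
            (c ((2 * j + 2 : ℕ) : ZMod (4 * k)) - c ((2 * j : ℕ) : ZMod (4 * k)))) = z * r ∧
      (Odd z ↔ Odd (Nat.card {i : ZMod (4 * k) // CrossD r hr (c i) (c (i + 1)) t})) := by
  haveI : NeZero (4 * k) := ⟨by omega⟩
  set P : ZMod (4 * k) → Prop := fun i => CrossD r hr (c i) (c (i + 1)) t with hP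
  set G : ℕ := (Finset.univ.filter P).card with hG
  -- the edge lengths of the directed extension
  set d : ZMod (4 * k) → ℝ := fun i => dlift r hr (c (i + 1) - c i) with hd
  set e : ZMod (4 * k) → ℝ := fun i => dlift r hr (c i - t) with he
  -- total length of all edges is G * r
  have hstep : ∀ i : ZMod (4 * k), d i = e (i + 1) - e i + (if P i then r else 0) := by
    intro i
    exact edge_step hr (ht i) (ht (i + 1))
  have hsum_d : ∑ i : ZMod (4 * k), d i = (G : ℝ) * r := by
    rw [Finset.sum_congr rfl (fun i _ => hstep i)]
    rw [Finset.sum_add_distrib, Finset.sum_sub_distrib, sum_shift, sub_self, zero_add,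
      Finset.sum_ite, Finset.sum_const, Finset.sum_const_zero, add_zero, nsmul_eq_mul]
  -- the pair relation
  have hpair : ∀ j ∈ Finset.range (2 * k),
      slift r hr (c ((2 * j + 2 : ℕ) : ZMod (4 * k)) - c ((2 * j : ℕ) : ZMod (4 * k))) =
        d ((2 * j : ℕ) : ZMod (4 * k)) + d ((2 * j + 1 : ℕ) : ZMod (4 * k)) - r := by
    intro j _
    have h := hc ((2 * j + 1 : ℕ) : ZMod (4 * k))
    have e1 : ((2 * j + 1 : ℕ) : ZMod (4 * k)) + 1 = ((2 * j + 2 : ℕ) : ZMod (4 * k)) := by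
      push_cast; ring
    have e2 : ((2 * j + 1 : ℕ) : ZMod (4 * k)) - 1 = ((2 * j : ℕ) : ZMod (4 * k)) := by
      push_cast; ring
    rw [e1, e2] at h
    have hps := pair_step hr h.1 h.2
    rw [hd]
    simp only
    rw [show ((2 * j : ℕ) : ZMod (4 * k)) + 1 = ((2 * j + 1 : ℕ) : ZMod (4 * k)) by
      push_cast; ring, e1]
    linarith
  have hsum_s : (∑ j ∈ Finset.range (2 * k),
      slift r hr (c ((2 * j + 2 : ℕ) : ZMod (4 * k)) - c ((2 * j : ℕ) : ZMod (4 * k)))) =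
      ((G : ℝ) - 2 * k) * r := by
    rw [Finset.sum_congr rfl hpair, Finset.sum_sub_distrib, Finset.sum_const,
      Finset.card_range, nsmul_eq_mul]
    have : ∑ j ∈ Finset.range (2 * k),
        (d ((2 * j : ℕ) : ZMod (4 * k)) + d ((2 * j + 1 : ℕ) : ZMod (4 * k))) =
        ∑ m ∈ Finset.range (4 * k), d ((m : ℕ) : ZMod (4 * k)) := by
      have h2 := sum_range_two_mul (fun m => d ((m : ℕ) : ZMod (4 * k))) (2 * k)
      rw [show 2 * (2 * k) = 4 * k by ring] at h2
      exact h2.symm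
    rw [this, ← sum_zmod_eq_sum_range, hsum_d]
    push_cast
    ring
  refine ⟨(G : ℤ) - 2 * k, ?_, ?_⟩
  · rw [hsum_s]; push_cast; ring
  · have hcard : Nat.card {i : ZMod (4 * k) // CrossD r hr (c i) (c (i + 1)) t} = G := by
      rw [Nat.card_eq_fintype_card, Fintype.card_subtype, hG]
    rw [hcard, Int.odd_sub]
    simp [Int.even_mul, Int.odd_coe_nat]
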